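/- Let α ∈ (1,2) and define q_α(y; c) := (α−1) c^{1−α/2} (1+c)^{α−1} (y+c)^{α/2} y^{α−1} ∫_y^1 (y+cv)^{−α} (1−v)^{α/2−1} dv for 0 < y < 1 and c > 0, with q_α(0;c) := lim_{y→0} q_α(y;c). Then: (a) for every c > 0 and all 0 ≤ y < 1, q_α(y; c) ≥ (α−1) c^{1−α/2} (c+y)^{α/2−1} (1−y); (b) for every c > 0, lim_{y→0} q_α(y; c) = 1; and (c) under hypotheses (I) and (S_α) with α ∈ (1,2), for every δ > 0, sup_{δ ≤ y ≤ 1} q_α(y; c) < 1. -/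

import Mathlib

open MeasureTheory ProbabilityTheory Filter Topology Set

noncomputable section

namespace IDLAPaper

variable {Ω : Type*}

/-- The random walk started at `x : ℤ` whose increments are `ξ 0, ξ 1, …`. -/
def walk (x : ℤ) (ξ : ℕ → Ω → ℤ) (n : ℕ) (ω : Ω) : ℤ :=
  x + ∑ i ∈ Finset.range n, ξ i ω

/-- The increments `ξ i` are i.i.d. under `P`. -/
def IsIID [MeasurableSpace Ω] (P : Measure Ω) (ξ : ℕ → Ω → ℤ) : Prop :=
  (∀ i, Measurable (ξ i)) ∧ iIndepFun ξ P ∧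
    ∀ i, Measure.map (ξ i) P = Measure.map (ξ 0) P

/-- Hypothesis (I): irreducibility of the random walk on `ℤ`. -/
def HypI [MeasurableSpace Ω] (P : Measure Ω) (ξ : ℕ → Ω → ℤ) : Prop :=
  ∀ x y : ℤ, ∃ n : ℕ, 0 < n ∧ 0 < P {ω | walk x ξ n ω = y}

/-- Hypothesis (S_α): symmetric increments in the domain of normal attraction of a
symmetric `α`-stable law, stated via the characteristic function. -/
def HypS [MeasurableSpace Ω] (P : Measure Ω) (ξ : ℕ → Ω → ℤ) (α : ℝ) : Prop :=
  Measure.map (fun ω => -ξ 0 ω) P = Measure.map (ξ 0) P ∧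
    ∃ β : ℝ, 0 < β ∧
      Tendsto (fun t : ℝ =>
          ((|t| ^ (-α) : ℝ) : ℂ) *
            (1 - ∫ ω, Complex.exp (Complex.I * (t : ℂ) * ((ξ 0 ω : ℤ) : ℂ)) ∂P))
        (𝓝[≠] (0 : ℝ)) (𝓝 ((β : ℝ) : ℂ))

/-- Hypothesis (M): zero mean and finite, positive variance. -/
def HypM [MeasurableSpace Ω] (P : Measure Ω) (ξ : ℕ → Ω → ℤ) : Prop :=
  Integrable (fun ω => ((ξ 0 ω : ℤ) : ℝ) ^ 2) P ∧
    0 < ∫ ω, ((ξ 0 ω : ℤ) : ℝ) ^ 2 ∂P ∧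
    ∫ ω, ((ξ 0 ω : ℤ) : ℝ) ∂P = 0

/-- Strict ascending ladder times of a path `S` (with the convention `sInf ∅ = 0`). -/
def ladderTime (S : ℕ → ℤ) : ℕ → ℕ
  | 0 => 0
  | k + 1 => sInf {n : ℕ | ladderTime S k < n ∧ S (ladderTime S k) < S n}

/-- Ladder heights of a path `S`. -/
def ladderHeight (S : ℕ → ℤ) (n : ℕ) : ℤ := S (ladderTime S n)

/-- The renewal counting process `N_y` of the ladder-height process. -/
def renewalCount (S : ℕ → ℤ) (y : ℤ) : ℕ :=
  sInf {n : ℕ | 0 < n ∧ y < ladderHeight S n}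

/-- The residual lifetime (overshoot) `Z_y = L_{N_y} - y`. -/
def residual (S : ℕ → ℤ) (y : ℤ) : ℤ := ladderHeight S (renewalCount S y) - y

/-- The ladder increment `Y = L_1 - L_0` for the walk started at `0`. -/
def ladderY (ξ : ℕ → Ω → ℤ) (ω : Ω) : ℤ := ladderHeight (fun n => walk 0 ξ n ω) 1

/-- The limit function `q_α(y; c)` of Lemma 2.8(ii), with `q_α(0; c)` defined to be the
value `1` of its limit as `y → 0` (as asserted in part (b)). -/
def qAlpha (α c y : ℝ) : ℝ :=
  if y = 0 then 1
  else (α - 1) * c ^ (1 - α / 2) * (1 + c) ^ (α - 1) * (y + c) ^ (α / 2) * y ^ (α - 1) *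
    ∫ v in y..1, (y + c * v) ^ (-α) * (1 - v) ^ (α / 2 - 1)

/-!
For `0 < y ≤ 1` put `r = c / (y + c)`, so that `y (1 + c) / (y + c) = 1 - r (1 - y)`.
Bounding the weight `(1 - v) ^ (α / 2 - 1)` below by `1` and integrating `(y + c v) ^ (-α)`
exactly gives `q_α(y; c) ≥ r ^ (-α / 2) (1 - (1 - r (1 - y)) ^ (α - 1))`. For `α ≤ 2` the
derivative of `v ↦ -(1 - v) ^ (α / 2) (y + c v) ^ (1 - α)` dominates `(α - 1) (y + c)` times
the integrand, which gives `q_α(y; c) ≤ r ^ (1 - α / 2) (1 - y) ^ (α / 2)`. Both bounds tend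
to `1` as `y → 0`. Bernoulli's inequality for the exponent `α - 1 ∈ (0, 1]` turns the lower
bound into (a), and `r ≤ 1` turns the upper one into `q_α(y; c) ≤ (1 - y) ^ (α / 2)`, hence (c).
-/

lemma hasDerivAt_add_mul_rpow (a b p x : ℝ) (hx : a + b * x ≠ 0) :
    HasDerivAt (fun x => (a + b * x) ^ p) (b * p * (a + b * x) ^ (p - 1)) x := by
  simpa using (((hasDerivAt_id x).const_mul b).const_add a).rpow_const (p := p) (Or.inl hx)

section

variable {α c y : ℝ}

lemma integrableOn_qAlpha_integrand (hα : 0 < α) (hc : 0 ≤ c) (hy : 0 < y) (hy1 : y ≤ 1) :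
    IntegrableOn (fun v => (y + c * v) ^ (-α) * (1 - v) ^ (α / 2 - 1)) (Icc y 1) := by
  rw [← intervalIntegrable_iff_integrableOn_Icc_of_le hy1]
  have hsing : IntervalIntegrable (fun v : ℝ => (1 - v) ^ (α / 2 - 1)) volume y 1 := by
    simpa using ((intervalIntegral.intervalIntegrable_rpow' (r := α / 2 - 1)
      (by linarith)).comp_sub_left 1 (a := 0) (b := 1 - y)).symm
  refine hsing.continuousOn_mul (ContinuousOn.rpow_const (by fun_prop) fun v hv => Or.inl ?_)
  rw [uIcc_of_le hy1] at hv
  nlinarith [hv.1]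

lemma le_integral_qAlpha_integrand (hα1 : 1 < α) (hα2 : α ≤ 2) (hc : 0 < c) (hy : 0 < y)
    (hy1 : y ≤ 1) :
    ((y * (1 + c)) ^ (1 - α) - (y + c) ^ (1 - α)) / (c * (α - 1)) ≤
      ∫ v in y..1, (y + c * v) ^ (-α) * (1 - v) ^ (α / 2 - 1) := by
  have hpos : ∀ v ∈ Icc y 1, 0 < y + c * v := fun v hv => by nlinarith [hv.1]
  let g : ℝ → ℝ := fun v => -(y + c * v) ^ (1 - α) / (c * (α - 1))
  have hg : g 1 - g y = ((y * (1 + c)) ^ (1 - α) - (y + c) ^ (1 - α)) / (c * (α - 1)) := by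
    simp only [g]; ring_nf
  rw [← hg]
  refine intervalIntegral.sub_le_integral_of_hasDeriv_right_of_le
    (g' := fun v => (y + c * v) ^ (-α)) hy1 (fun v hv => ?_) (fun v hv => ?_)
    (integrableOn_qAlpha_integrand (by linarith) hc.le hy hy1) (fun v hv => ?_)
  · exact (ContinuousOn.rpow_const (by fun_prop) fun v hv => Or.inl (hpos v hv).ne').neg
      |>.div_const _ v hv
  · have hv' := hpos v (Ioo_subset_Icc_self hv)
    refine (((hasDerivAt_add_mul_rpow y c (1 - α) v hv'.ne').neg.div_const _).congr_deriv
      ?_).hasDerivWithinAt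
    have : α - 1 ≠ 0 := by linarith
    rw [show 1 - α - 1 = -α by ring]
    field_simp [hc.ne']
    ring
  · have hv' := hpos v (Ioo_subset_Icc_self hv)
    have : 1 ≤ (1 - v) ^ (α / 2 - 1) := Real.one_le_rpow_of_pos_of_le_one_of_nonpos
      (by linarith [hv.2]) (by linarith [hv.1]) (by linarith)
    exact le_mul_of_one_le_right (by positivity) this

lemma mul_integral_qAlpha_integrand_le (hα1 : 1 < α) (hα2 : α ≤ 2) (hc : 0 < c) (hy : 0 < y)
    (hy1 : y ≤ 1) :
    (α - 1) * (y + c) * ∫ v in y..1, (y + c * v) ^ (-α) * (1 - v) ^ (α / 2 - 1) ≤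
      (1 - y) ^ (α / 2) * (y * (1 + c)) ^ (1 - α) := by
  have hpos : ∀ v ∈ Icc y 1, 0 < y + c * v := fun v hv => by nlinarith [hv.1]
  let g : ℝ → ℝ := fun v => -((1 - v) ^ (α / 2) * (y + c * v) ^ (1 - α))
  have hg : g 1 - g y = (1 - y) ^ (α / 2) * (y * (1 + c)) ^ (1 - α) := by
    simp only [g, sub_self, Real.zero_rpow (by linarith : α / 2 ≠ 0)]
    ring_nf
  rw [← hg, ← intervalIntegral.integral_const_mul]
  refine intervalIntegral.integral_le_sub_of_hasDeriv_right_of_le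
    (g' := fun v => -(-1 * (α / 2) * (1 - v) ^ (α / 2 - 1) * (y + c * v) ^ (1 - α) +
      (1 - v) ^ (α / 2) * (c * (1 - α) * (y + c * v) ^ (1 - α - 1)))) hy1
    (fun v hv => ?_) (fun v hv => ?_)
    ((integrableOn_qAlpha_integrand (by linarith) hc.le hy hy1).const_mul _) (fun v hv => ?_)
  · exact ((ContinuousOn.rpow_const (by fun_prop) fun v _ => Or.inr (by linarith)).mul
      (ContinuousOn.rpow_const (by fun_prop) fun v hv => Or.inl (hpos v hv).ne')).neg v hv
  · have h1v : 1 - v ≠ 0 := by linarith [hv.2]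
    have hv' := hpos v (Ioo_subset_Icc_self hv)
    exact ((((hasDerivAt_id v).const_sub 1).rpow_const (Or.inl h1v)).mul
      (hasDerivAt_add_mul_rpow y c (1 - α) v hv'.ne')).neg.hasDerivWithinAt
  · have hv' := hpos v (Ioo_subset_Icc_self hv)
    have h1v : 0 < 1 - v := by linarith [hv.2]
    have hA : (1 - v) ^ (α / 2) = (1 - v) ^ (α / 2 - 1) * (1 - v) := by
      rw [← Real.rpow_add_one h1v.ne', sub_add_cancel]
    have hB : (y + c * v) ^ (1 - α) = (y + c * v) ^ (-α) * (y + c * v) := by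
      rw [← Real.rpow_add_one hv'.ne', neg_add_eq_sub]
    rw [hA, hB, show 1 - α - 1 = -α by ring]
    have hP : 0 ≤ (1 - v) ^ (α / 2 - 1) * (y + c * v) ^ (-α) := by positivity
    nlinarith [mul_nonneg hP (mul_nonneg (by linarith : (0 : ℝ) ≤ 2 - α) hv'.le)]

lemma qAlpha_of_pos (hc : 0 ≤ c) (hy : 0 < y) :
    qAlpha α c y = (α - 1) * c ^ (1 - α / 2) * (y + c) ^ (α / 2) *
      (∫ v in y..1, (y + c * v) ^ (-α) * (1 - v) ^ (α / 2 - 1)) / (y * (1 + c)) ^ (1 - α) := by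
  rw [qAlpha, if_neg hy.ne', show 1 - α = -(α - 1) by ring, Real.rpow_neg (by positivity),
    Real.mul_rpow hy.le (by positivity), div_inv_eq_mul]
  ring

lemma qAlpha_le (hα1 : 1 < α) (hα2 : α ≤ 2) (hc : 0 < c) (hy : 0 < y) (hy1 : y ≤ 1) :
    qAlpha α c y ≤ (c / (y + c)) ^ (1 - α / 2) * (1 - y) ^ (α / 2) := by
  have hyc : 0 < y + c := by linarith
  have hr : c ^ (1 - α / 2) * (y + c) ^ (α / 2) = (c / (y + c)) ^ (1 - α / 2) * (y + c) := by
    rw [Real.div_rpow hc.le hyc.le, Real.rpow_sub hyc, Real.rpow_one]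
    field_simp
  rw [qAlpha_of_pos hc.le hy, div_le_iff₀ (by positivity)]
  calc _ = (c / (y + c)) ^ (1 - α / 2) *
        ((α - 1) * (y + c) * ∫ v in y..1, (y + c * v) ^ (-α) * (1 - v) ^ (α / 2 - 1)) := by
          rw [mul_assoc _ (c ^ _), hr]; ring
    _ ≤ (c / (y + c)) ^ (1 - α / 2) * ((1 - y) ^ (α / 2) * (y * (1 + c)) ^ (1 - α)) :=
          mul_le_mul_of_nonneg_left (mul_integral_qAlpha_integrand_le hα1 hα2 hc hy hy1)
            (by positivity)
    _ = _ := by ring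

lemma le_qAlpha (hα1 : 1 < α) (hα2 : α ≤ 2) (hc : 0 < c) (hy : 0 < y) (hy1 : y ≤ 1) :
    (c / (y + c)) ^ (-(α / 2)) * (1 - (y * (1 + c) / (y + c)) ^ (α - 1)) ≤ qAlpha α c y := by
  have hyc : 0 < y + c := by linarith
  have hs : 0 < y * (1 + c) := by positivity
  rw [qAlpha_of_pos hc.le hy, le_div_iff₀ (by positivity)]
  calc _ = (α - 1) * c ^ (1 - α / 2) * (y + c) ^ (α / 2) *
        (((y * (1 + c)) ^ (1 - α) - (y + c) ^ (1 - α)) / (c * (α - 1))) := by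
          have : α - 1 ≠ 0 := by linarith
          have : 1 - α ≠ 0 := by linarith
          rw [Real.div_rpow hc.le hyc.le, Real.div_rpow hs.le hyc.le, Real.rpow_neg hc.le,
            Real.rpow_neg hyc.le, Real.rpow_sub hc, Real.rpow_one, show α - 1 = -(1 - α) by ring,
            Real.rpow_neg hs.le, Real.rpow_neg hyc.le]
          field_simp
    _ ≤ _ :=
          mul_le_mul_of_nonneg_left (le_integral_qAlpha_integrand hα1 hα2 hc hy hy1)
            (by positivity)

lemma linear_le_qAlpha (hα1 : 1 < α) (hα2 : α ≤ 2) (hc : 0 < c) (hy0 : 0 ≤ y) (hy1 : y < 1) :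
    (α - 1) * c ^ (1 - α / 2) * (c + y) ^ (α / 2 - 1) * (1 - y) ≤ qAlpha α c y := by
  rcases hy0.eq_or_lt with rfl | hy
  · rw [qAlpha, if_pos rfl, add_zero, sub_zero, mul_one, mul_assoc, ← Real.rpow_add hc,
      show 1 - α / 2 + (α / 2 - 1) = 0 by ring, Real.rpow_zero]
    linarith
  have hyc : 0 < y + c := by linarith
  set r := c / (y + c) with hr_def
  have hr : 0 < r := by positivity
  have hr1 : r ≤ 1 := (div_le_one hyc).2 (by linarith)
  have ht : y * (1 + c) / (y + c) = 1 + -(r * (1 - y)) := by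
    rw [hr_def]; field_simp; ring
  have hbern : (1 + -(r * (1 - y))) ^ (α - 1) ≤ 1 + (α - 1) * -(r * (1 - y)) :=
    rpow_one_add_le_one_add_mul_self (by nlinarith) (by linarith) (by linarith)
  have hpow : c ^ (1 - α / 2) * (c + y) ^ (α / 2 - 1) = r ^ (-(α / 2)) * r := by
    rw [← Real.rpow_add_one hr.ne', show 1 - α / 2 = -(α / 2) + 1 by ring, hr_def,
      Real.div_rpow hc.le hyc.le, add_comm c y, show α / 2 - 1 = -(-(α / 2) + 1) by ring,
      Real.rpow_neg hyc.le, div_eq_mul_inv (c ^ _)]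
  calc _ = r ^ (-(α / 2)) * ((α - 1) * (r * (1 - y))) := by
        rw [mul_assoc _ (c ^ _), hpow]; ring
    _ ≤ r ^ (-(α / 2)) * (1 - (y * (1 + c) / (y + c)) ^ (α - 1)) := by
          gcongr; rw [ht]; linarith
    _ ≤ qAlpha α c y := le_qAlpha hα1 hα2 hc hy hy1.le

lemma qAlpha_le_one_sub_rpow (hα1 : 1 < α) (hα2 : α ≤ 2) (hc : 0 < c) (hy : 0 < y)
    (hy1 : y ≤ 1) : qAlpha α c y ≤ (1 - y) ^ (α / 2) := by
  have hr : (c / (y + c)) ^ (1 - α / 2) ≤ 1 :=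
    Real.rpow_le_one (by positivity) ((div_le_one (by linarith)).2 (by linarith)) (by linarith)
  calc _ ≤ _ := qAlpha_le hα1 hα2 hc hy hy1
    _ ≤ (1 - y) ^ (α / 2) := mul_le_of_le_one_left (by positivity) hr

lemma exists_lt_one_qAlpha_le (hα1 : 1 < α) (hα2 : α ≤ 2) (hc : 0 < c) {δ : ℝ} (hδ : 0 < δ) :
    ∃ b < 1, ∀ y, δ ≤ y → y ≤ 1 → qAlpha α c y ≤ b := by
  have hm : 0 < min δ 1 := lt_min hδ one_pos
  refine ⟨(1 - min δ 1) ^ (α / 2), Real.rpow_lt_one (by linarith [min_le_right δ 1])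
    (by linarith) (by linarith), fun y hδy hy1 => ?_⟩
  have hy : min δ 1 ≤ y := (min_le_left δ 1).trans hδy
  calc _ ≤ (1 - y) ^ (α / 2) := qAlpha_le_one_sub_rpow hα1 hα2 hc (hm.trans_le hy) hy1
    _ ≤ _ := Real.rpow_le_rpow (by linarith) (by linarith) (by linarith)

lemma tendsto_qAlpha_nhdsGT_zero (hα1 : 1 < α) (hα2 : α ≤ 2) (hc : 0 < c) :
    Tendsto (qAlpha α c) (𝓝[>] 0) (𝓝 1) := by
  have hL : ContinuousAt (fun y => (c / (y + c)) ^ (-(α / 2)) *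
      (1 - (y * (1 + c) / (y + c)) ^ (α - 1))) 0 := by
    fun_prop (disch := first | (right; linarith) | (left; simp [hc.ne']) | simp [hc.ne'])
  have hU : ContinuousAt (fun y => (c / (y + c)) ^ (1 - α / 2) * (1 - y) ^ (α / 2)) 0 := by
    fun_prop (disch := first | (right; linarith) | (left; simp [hc.ne']) | simp [hc.ne'])
  have h0 : ∀ {f : ℝ → ℝ}, ContinuousAt f 0 → f 0 = 1 → Tendsto f (𝓝[>] 0) (𝓝 1) :=
    fun hf hf0 => hf0 ▸ hf.tendsto.mono_left nhdsWithin_le_nhds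
  refine tendsto_of_tendsto_of_tendsto_of_le_of_le'
    (h0 hL (by simp [hc.ne', Real.zero_rpow (by linarith : α - 1 ≠ 0)]))
    (h0 hU (by simp [hc.ne'])) ?_ ?_
  · filter_upwards [Ioo_mem_nhdsGT one_pos] with y hy using le_qAlpha hα1 hα2 hc hy.1 hy.2.le
  · filter_upwards [Ioo_mem_nhdsGT one_pos] with y hy using qAlpha_le hα1 hα2 hc hy.1 hy.2.le

end

/-- **Lemma 2.11**: for `α ∈ (1,2)`:
(a) `q_α(y;c) ≥ (α−1) c^{1−α/2} (c+y)^{α/2−1} (1−y)` for `0 ≤ y < 1` and `c > 0`;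
(b) `q_α(y;c) → 1` as `y → 0` for every `c > 0`;
(c) under hypotheses (I) and (S_α), for every `δ > 0`, `sup_{δ ≤ y ≤ 1} q_α(y;c) < 1`. -/
theorem qAlpha_bounds (α : ℝ) (hα1 : 1 < α) (hα2 : α < 2) :
    (∀ c : ℝ, 0 < c → ∀ y : ℝ, 0 ≤ y → y < 1 →
      (α - 1) * c ^ (1 - α / 2) * (c + y) ^ (α / 2 - 1) * (1 - y) ≤ qAlpha α c y) ∧
    (∀ c : ℝ, 0 < c → Tendsto (fun y => qAlpha α c y) (𝓝[>] (0 : ℝ)) (𝓝 1)) ∧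
    (∀ (Ω' : Type) (_ : MeasurableSpace Ω') (P : Measure Ω'), IsProbabilityMeasure P →
      ∀ ξ : ℕ → Ω' → ℤ, IsIID P ξ → HypI P ξ → HypS P ξ α →
        ∀ c : ℝ, 0 < c → ∀ δ : ℝ, 0 < δ →
          ∃ b : ℝ, b < 1 ∧ ∀ y : ℝ, δ ≤ y → y ≤ 1 → qAlpha α c y ≤ b) :=
  ⟨fun _ hc _ hy0 hy1 => linear_le_qAlpha hα1 hα2.le hc hy0 hy1,
    fun _ hc => tendsto_qAlpha_nhdsGT_zero hα1 hα2.le hc,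
    fun _ _ _ _ _ _ _ _ _ hc _ hδ => exists_lt_one_qAlpha_le hα1 hα2.le hc hδ⟩

end IDLAPaper
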